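/- The function h(a) = φ(a) − aΦ(−a) is strictly positive for all a ∈ ℝ, strictly decreasing for a > 0, and satisfies h(a) → 0 as a → ∞. Consequently, the asymptotic bias Δ₁(a) = 2h(a) of Viterbi training for the symmetric two-Gaussian mixture vanishes as the components separate (a → ∞) and is maximal at a = 0 with value 2φ(0). -/

import Mathlib

open Real Set MeasureTheory Filter

/-- standard normal density -/
noncomputable def stdPhi (x : ℝ) : ℝ := (Real.sqrt (2 * Real.pi))⁻¹ * Real.exp (-x ^ 2 / 2)

/-- standard normal CDF -/
noncomputable def stdCDF (t : ℝ) : ℝ := ∫ x in Set.Iic t, stdPhi x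

/-!
Since `φ' x = -x φ x`, the function `h a = φ a - a Φ(-a)` has derivative `-Φ(-a) < 0`, so it is
strictly decreasing on all of `ℝ`. Integrating `a ≤ -x` against `φ` over `x ≤ -a` gives
`a Φ(-a) ≤ ∫_{x ≤ -a} -x φ x = φ a`, i.e. `h ≥ 0`; strict monotonicity upgrades this to `h > 0`,
and for `a ≥ 0` the squeeze `0 ≤ h a ≤ φ a` gives `h a → 0`.
-/

lemma hasDerivAt_integral_Iic {E : Type*} [NormedAddCommGroup E] [NormedSpace ℝ E]
    [CompleteSpace E] {f : ℝ → E} (hf : Continuous f) (hfi : Integrable f) (t : ℝ) :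
    HasDerivAt (fun u => ∫ x in Iic u, f x) (f t) t := by
  have split : (fun u => ∫ x in Iic u, f x) =
      fun u => (∫ x in Iic 0, f x) + ∫ x in (0 : ℝ)..u, f x := by
    funext u
    rw [← intervalIntegral.integral_Iic_sub_Iic hfi.integrableOn hfi.integrableOn,
      add_sub_cancel]
  rw [split]
  exact (intervalIntegral.integral_hasDerivAt_right (hf.intervalIntegrable 0 t)
    hf.stronglyMeasurable.stronglyMeasurableAtFilter hf.continuousAt).const_add _

lemma stdPhi_eq_gaussianPDFReal : stdPhi = ProbabilityTheory.gaussianPDFReal 0 1 := by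
  funext x
  simp [stdPhi, ProbabilityTheory.gaussianPDFReal]

lemma stdPhi_pos (x : ℝ) : 0 < stdPhi x := by
  rw [stdPhi_eq_gaussianPDFReal]
  exact ProbabilityTheory.gaussianPDFReal_pos 0 1 x one_ne_zero

lemma integrable_stdPhi : Integrable stdPhi := by
  rw [stdPhi_eq_gaussianPDFReal]
  exact ProbabilityTheory.integrable_gaussianPDFReal 0 1

lemma continuous_stdPhi : Continuous stdPhi := by
  unfold stdPhi
  fun_prop

lemma stdPhi_neg (x : ℝ) : stdPhi (-x) = stdPhi x := by
  simp [stdPhi]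

lemma hasDerivAt_stdPhi (x : ℝ) : HasDerivAt stdPhi (-x * stdPhi x) x := by
  have hexp : HasDerivAt (fun x : ℝ => -x ^ 2 / 2) (-x) x := by
    refine (((hasDerivAt_pow 2 x).neg).div_const 2).congr_deriv ?_
    ring
  refine ((hexp.exp).const_mul (Real.sqrt (2 * Real.pi))⁻¹).congr_deriv ?_
  simp only [stdPhi]
  ring

lemma integrable_neg_mul_stdPhi : Integrable (fun x : ℝ => -x * stdPhi x) := by
  have h := ((integrable_mul_exp_neg_mul_sq (b := 1 / 2) (by norm_num)).const_mul
    (Real.sqrt (2 * Real.pi))⁻¹).neg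
  refine h.congr (Eventually.of_forall fun x => ?_)
  simp only [Pi.neg_apply, stdPhi]
  rw [show -(1 / 2) * x ^ 2 = -x ^ 2 / 2 by ring]
  ring

lemma tendsto_stdPhi_atBot : Tendsto stdPhi atBot (nhds 0) :=
  tendsto_zero_of_hasDerivAt_of_integrableOn_Iic (a := 0) (fun x _ => hasDerivAt_stdPhi x)
    integrable_neg_mul_stdPhi.integrableOn integrable_stdPhi.integrableOn

lemma tendsto_stdPhi_atTop : Tendsto stdPhi atTop (nhds 0) :=
  (tendsto_stdPhi_atBot.comp tendsto_neg_atTop_atBot).congr stdPhi_neg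

lemma integral_Iic_neg_mul_stdPhi (t : ℝ) : ∫ x in Iic t, -x * stdPhi x = stdPhi t := by
  simpa using integral_Iic_of_hasDerivAt_of_tendsto continuous_stdPhi.continuousWithinAt
    (fun x _ => hasDerivAt_stdPhi x) integrable_neg_mul_stdPhi.integrableOn tendsto_stdPhi_atBot

lemma stdCDF_pos (t : ℝ) : 0 < stdCDF t := by
  rw [stdCDF, setIntegral_pos_iff_support_of_nonneg_ae
    (Eventually.of_forall fun x => (stdPhi_pos x).le) integrable_stdPhi.integrableOn]
  have hsupp : Function.support stdPhi = univ :=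
    eq_univ_of_forall fun x => (stdPhi_pos x).ne'
  simp [hsupp]

lemma hasDerivAt_stdCDF (t : ℝ) : HasDerivAt stdCDF (stdPhi t) t :=
  hasDerivAt_integral_Iic continuous_stdPhi integrable_stdPhi t

/-- The standard normal linear loss function `E[(Z - a)⁺]`, the function `h` of the paper. -/
noncomputable def normalLoss (a : ℝ) : ℝ := stdPhi a - a * stdCDF (-a)

lemma hasDerivAt_normalLoss (a : ℝ) : HasDerivAt normalLoss (-stdCDF (-a)) a := by
  have hCDF : HasDerivAt (fun a : ℝ => stdCDF (-a)) (-stdPhi a) a := by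
    refine ((hasDerivAt_stdCDF (-a)).comp a (hasDerivAt_neg a)).congr_deriv ?_
    rw [stdPhi_neg]
    ring
  refine ((hasDerivAt_stdPhi a).sub ((hasDerivAt_id a).mul hCDF)).congr_deriv ?_
  simp only [id_eq]
  ring

lemma strictAnti_normalLoss : StrictAnti normalLoss :=
  strictAnti_of_hasDerivAt_neg hasDerivAt_normalLoss fun a => neg_neg_of_pos (stdCDF_pos (-a))

lemma mul_stdCDF_neg_le_stdPhi (a : ℝ) : a * stdCDF (-a) ≤ stdPhi a := by
  calc a * stdCDF (-a) = ∫ x in Iic (-a), a * stdPhi x := (integral_const_mul a _).symm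
    _ ≤ ∫ x in Iic (-a), -x * stdPhi x := by
        refine setIntegral_mono_on (integrable_stdPhi.const_mul a).integrableOn
          integrable_neg_mul_stdPhi.integrableOn measurableSet_Iic fun x hx => ?_
        have hx : a ≤ -x := le_neg_of_le_neg hx
        exact mul_le_mul_of_nonneg_right hx (stdPhi_pos x).le
    _ = stdPhi a := by rw [integral_Iic_neg_mul_stdPhi, stdPhi_neg]

lemma normalLoss_nonneg (a : ℝ) : 0 ≤ normalLoss a :=
  sub_nonneg.mpr (mul_stdCDF_neg_le_stdPhi a)

lemma normalLoss_pos (a : ℝ) : 0 < normalLoss a :=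
  (normalLoss_nonneg (a + 1)).trans_lt (strictAnti_normalLoss (lt_add_one a))

lemma tendsto_normalLoss_atTop : Tendsto normalLoss atTop (nhds 0) := by
  refine tendsto_of_tendsto_of_tendsto_of_le_of_le' tendsto_const_nhds tendsto_stdPhi_atTop
    (Eventually.of_forall normalLoss_nonneg) ?_
  filter_upwards [eventually_ge_atTop 0] with a ha
  exact sub_le_self _ (mul_nonneg ha (stdCDF_pos (-a)).le)

theorem stmt19 :
    (∀ a : ℝ, 0 < stdPhi a - a * stdCDF (-a)) ∧
    StrictAntiOn (fun a : ℝ => stdPhi a - a * stdCDF (-a)) (Set.Ioi 0) ∧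
    Tendsto (fun a : ℝ => stdPhi a - a * stdCDF (-a)) atTop (nhds 0) ∧
    (∀ a : ℝ, 0 ≤ a →
      2 * (stdPhi a - a * stdCDF (-a)) ≤ 2 * (stdPhi 0 - 0 * stdCDF (-0))) ∧
    2 * (stdPhi 0 - 0 * stdCDF (-0)) = 2 * stdPhi 0 := by
  refine ⟨normalLoss_pos, strictAnti_normalLoss.strictAntiOn _, tendsto_normalLoss_atTop,
    fun a ha => ?_, by ring⟩
  exact mul_le_mul_of_nonneg_left (strictAnti_normalLoss.antitone ha) zero_le_two
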